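/- Let F be a field, n a natural number, G a subgroup of the general linear group GL(n, F), and H a subgroup of G. Then the chain (E_k(H))_{k∈ℕ} stabilizes: there exists N ∈ ℕ such that E_k(H) = E_N(H) for all k ≥ N. -/

import Mathlib

open scoped commutatorElement

/-- Iterated centralizer `C_S^k(A)` of the subset `A` inside the ambient (sub)group
given by the set `S`, following Bryant: `C^0 = {1}` and
`C^{k+1}(A) = {x ∈ ⋂_{n ≤ k} N_S(C^n(A)) | [x, a] ∈ C^k(A) for all a ∈ A}`. -/
def iterCent {G : Type*} [Group G] (S A : Set G) : ℕ → Set G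
  | 0 => {1}
  | k + 1 =>
    {x | x ∈ S ∧
      (∀ n, n ≤ k → ∀ h ∈ S, (x * h * x⁻¹ ∈ iterCent S A n ↔ h ∈ iterCent S A n)) ∧
      ∀ a ∈ A, ⁅x, a⁆ ∈ iterCent S A k}
  termination_by n => n
  decreasing_by all_goals omega

/-- The `E_k`-envelopes of a subgroup (given as the set `H`) in `G`:
`E_0(H) = G` and `E_{k+1}(H) = {g ∈ E_k(H) | [g, C_{E_k(H)}^{k+1}(H)] ⊆ C_{E_k(H)}^k(H)}`. -/
def env {G : Type*} [Group G] (H : Set G) : ℕ → Set G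
  | 0 => Set.univ
  | k + 1 =>
    {g | g ∈ env H k ∧
      ∀ c ∈ iterCent (env H k) H (k + 1), ⁅g, c⁆ ∈ iterCent (env H k) H k}

/-- The upper central series `Z_k` of the (sub)group given by the set `S`:
`Z_0 = {1}` and `Z_{k+1} = {x ∈ S | [x, g] ∈ Z_k for all g ∈ S}`. -/
def upperCent {G : Type*} [Group G] (S : Set G) : ℕ → Set G
  | 0 => {1}
  | k + 1 => {x | x ∈ S ∧ ∀ g ∈ S, ⁅x, g⁆ ∈ upperCent S k}

/-!
Give a linear group the Zariski topology, with the entries of `g` and `g⁻¹` as coordinates. It is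
Noetherian (Hilbert's basis theorem), points are closed, and translations and the maps
`g ↦ g c g⁻¹` are polynomial, hence continuous. In such a group every `C^j_S(H)` of a closed
subgroup `S` is a closed subgroup, and so, inductively, is every envelope `E_k(H)`. The only
non-formal point is that `E_{k+1}(H)` is closed under inverses: its elements conjugate the closed
set `C^k` into itself, and a homeomorphism of a Noetherian space that maps a closed set into itself
maps it onto itself. The envelopes thus form a descending chain of closed sets, which stabilizes.
-/

open Set TopologicalSpace Topology
open Subgroup (normalizer)

section Group

variable {G : Type*} [Group G]

theorem iterCent_zero (S A : Set G) : iterCent S A 0 = {1} := by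
  rw [iterCent]

theorem mem_iterCent_succ {S A : Set G} {j : ℕ} {x : G} :
    x ∈ iterCent S A (j + 1) ↔ x ∈ S ∧
      (∀ n ≤ j, ∀ h ∈ S, (x * h * x⁻¹ ∈ iterCent S A n ↔ h ∈ iterCent S A n)) ∧
      ∀ a ∈ A, ⁅x, a⁆ ∈ iterCent S A j := by
  rw [iterCent]; rfl

theorem iterCent_subset {S : Set G} (hS : (1 : G) ∈ S) (A : Set G) :
    ∀ j, iterCent S A j ⊆ S
  | 0 => by rw [iterCent_zero]; exact singleton_subset_iff.2 hS
  | _ + 1 => fun _ hx => (mem_iterCent_succ.1 hx).1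

theorem Subgroup.mem_normalizer_iff_of_subset {S : Subgroup G} {C : Set G} (hC : C ⊆ S)
    {x : G} (hx : x ∈ S) :
    x ∈ normalizer C ↔ ∀ h ∈ S, (x * h * x⁻¹ ∈ C ↔ h ∈ C) := by
  refine ⟨fun hN h _ => (hN h).symm, fun hS h => ?_⟩
  by_cases hh : h ∈ S
  · exact (hS h hh).symm
  · have hxh : x * h * x⁻¹ ∉ S := fun hxh => hh <| by
      simpa [mul_assoc] using S.mul_mem (S.mul_mem (S.inv_mem hx) hxh) hx
    exact iff_of_false (fun h' => hh (hC h')) (fun h' => hxh (hC h'))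

/-- The preimage of the centralizer of `A` in `N_G(K) / K`. -/
def Subgroup.centralizerModulo (K : Subgroup G) (A : Set G) : Subgroup G where
  carrier := {x | x ∈ normalizer (K : Set G) ∧ ∀ a ∈ A, ⁅x, a⁆ ∈ K}
  one_mem' := ⟨one_mem _, fun a _ => by simp [K.one_mem]⟩
  mul_mem' := by
    rintro x y ⟨hxN, hxA⟩ ⟨hyN, hyA⟩
    refine ⟨mul_mem hxN hyN, fun a ha => ?_⟩
    have hconj : x * ⁅y, a⁆ * x⁻¹ ∈ K := (hxN _).1 (hyA a ha)
    rw [show ⁅x * y, a⁆ = x * ⁅y, a⁆ * x⁻¹ * ⁅x, a⁆ by group]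
    exact K.mul_mem hconj (hxA a ha)
  inv_mem' := by
    rintro x ⟨hxN, hxA⟩
    refine ⟨inv_mem hxN, fun a ha => ?_⟩
    rw [show ⁅x⁻¹, a⁆ = x⁻¹ * ⁅x, a⁆⁻¹ * x by group]
    exact (Subgroup.mem_set_normalizer_iff''.1 hxN _).1 (K.inv_mem (hxA a ha))

theorem Subgroup.mem_centralizerModulo {K : Subgroup G} {A : Set G} {x : G} :
    x ∈ K.centralizerModulo A ↔
      x ∈ normalizer (K : Set G) ∧ ∀ a ∈ A, ⁅x, a⁆ ∈ K :=
  Iff.rfl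

def iterCentSubgroup (S : Subgroup G) (A : Set G) : ℕ → Subgroup G
  | 0 => ⊥
  | j + 1 => S ⊓ (⨅ n ≤ j, normalizer (iterCent S A n)) ⊓
      (iterCentSubgroup S A j).centralizerModulo A

theorem coe_iterCentSubgroup (S : Subgroup G) (A : Set G) :
    ∀ j, (iterCentSubgroup S A j : Set G) = iterCent S A j
  | 0 => by rw [iterCent_zero]; rfl
  | j + 1 => by
    ext x
    have ih := coe_iterCentSubgroup S A j
    have hC := iterCent_subset S.one_mem A
    simp only [iterCentSubgroup, Subgroup.coe_inf, Subgroup.coe_iInf, mem_inter_iff, mem_iInter,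
      SetLike.mem_coe, Subgroup.mem_centralizerModulo, mem_iterCent_succ, ih,
      ← SetLike.mem_coe (x := ⁅x, _⁆)]
    constructor
    · rintro ⟨⟨hxS, hN⟩, -, hA⟩
      exact ⟨hxS, fun n hn => (Subgroup.mem_normalizer_iff_of_subset (hC n) hxS).1 (hN n hn),
        hA⟩
    · rintro ⟨hxS, hN, hA⟩
      have hN' n hn := (Subgroup.mem_normalizer_iff_of_subset (hC n) hxS).2 (hN n hn)
      exact ⟨⟨hxS, hN'⟩, hN' j le_rfl, hA⟩

theorem iterCent_subset_iterCent_succ (S : Subgroup G) (A : Set G) :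
    ∀ j, iterCent S A j ⊆ iterCent S A (j + 1)
  | 0 => by
    rw [iterCent_zero, singleton_subset_iff, ← coe_iterCentSubgroup]
    exact one_mem _
  | j + 1 => fun x hx => by
    obtain ⟨hxS, hN, hA⟩ := mem_iterCent_succ.1 hx
    refine mem_iterCent_succ.2
      ⟨hxS, fun n hn => ?_, fun a ha => iterCent_subset_iterCent_succ S A j (hA a ha)⟩
    rcases hn.lt_or_eq with hn | rfl
    · exact hN n (Nat.lt_succ_iff.1 hn)
    · refine (Subgroup.mem_normalizer_iff_of_subset (iterCent_subset S.one_mem A _) hxS).1 ?_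
      rw [← coe_iterCentSubgroup]
      exact Subgroup.le_normalizer (by rwa [← SetLike.mem_coe, coe_iterCentSubgroup])

theorem env_succ (A : Set G) (k : ℕ) :
    env A (k + 1) = {g | g ∈ env A k ∧
      ∀ c ∈ iterCent (env A k) A (k + 1), ⁅g, c⁆ ∈ iterCent (env A k) A k} := by
  rw [env]

end Group

namespace TopologicalSpace.NoetherianSpace

variable {X : Type*} [TopologicalSpace X] [NoetherianSpace X]

theorem exists_eq_of_antitone {s : ℕ → Set X} (hs : Antitone s) (hc : ∀ k, IsClosed (s k)) :
    ∃ N, ∀ k ≥ N, s k = s N := by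
  obtain ⟨N, hN⟩ := WellFoundedLT.antitone_chain_condition
    (f := fun k => (⟨s k, hc k⟩ : Closeds X)) fun _ _ hkl => hs hkl
  exact ⟨N, fun k hk => congrArg SetLike.coe (hN k hk).symm⟩

/-- The images `f^[m] '' s` form a descending chain of closed sets; once it stops, `f '' s = s`. -/
theorem mapsTo_symm (f : X ≃ₜ X) {s : Set X} (hs : IsClosed s) (h : MapsTo f s s) :
    MapsTo f.symm s s := by
  have hV : Antitone fun m => f.symm^[m] ⁻¹' s := antitone_nat_of_succ_le fun m x hx => by
    simpa [Function.iterate_succ_apply'] using h hx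
  obtain ⟨N, hN⟩ := exists_eq_of_antitone hV fun m => hs.preimage (f.symm.continuous.iterate m)
  intro x hx
  have hx' : f^[N] x ∈ f.symm^[N + 1] ⁻¹' s := by
    rw [hN (N + 1) N.le_succ, mem_preimage, Function.LeftInverse.iterate f.symm_apply_apply N]
    exact hx
  rwa [mem_preimage, Function.iterate_succ_apply',
    Function.LeftInverse.iterate f.symm_apply_apply N] at hx'

end TopologicalSpace.NoetherianSpace

section NoetherianGroup

variable {G : Type*} [Group G] [TopologicalSpace G] [NoetherianSpace G] [SeparatelyContinuousMul G]

theorem mem_normalizer_of_conj_mem {C : Set G} (hC : IsClosed C) {g : G}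
    (h : ∀ c ∈ C, g * c * g⁻¹ ∈ C) : g ∈ normalizer C := by
  have hback := NoetherianSpace.mapsTo_symm
    ((Homeomorph.mulLeft g).trans (Homeomorph.mulRight g⁻¹)) hC fun c hc => h c hc
  refine fun n => ⟨h n, fun hn => ?_⟩
  simpa [Homeomorph.mulLeft_symm, Homeomorph.mulRight_symm, mul_assoc] using hback hn

variable (hconj : ∀ c : G, Continuous fun g : G => g * c * g⁻¹)
include hconj

theorem isClosed_normalizer {C : Set G} (hC : IsClosed C) :
    IsClosed (normalizer C : Set G) := by
  have : (normalizer C : Set G) = ⋂ c ∈ C, (fun g => g * c * g⁻¹) ⁻¹' C := by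
    ext g
    simp only [SetLike.mem_coe, mem_iInter₂, mem_preimage]
    exact ⟨fun hg c hc => (hg c).1 hc, mem_normalizer_of_conj_mem hC⟩
  rw [this]
  exact isClosed_biInter fun c _ => hC.preimage (hconj c)

theorem isClosed_centralizerModulo {K : Subgroup G} (hK : IsClosed (K : Set G)) (A : Set G) :
    IsClosed (K.centralizerModulo A : Set G) := by
  have : (K.centralizerModulo A : Set G) =
      (normalizer (K : Set G) : Set G) ∩ ⋂ a ∈ A, (fun x => ⁅x, a⁆) ⁻¹' K := by
    ext x
    simp only [SetLike.mem_coe, Subgroup.mem_centralizerModulo, mem_inter_iff, mem_iInter₂,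
      mem_preimage]
  rw [this]
  refine (isClosed_normalizer hconj hK).inter (isClosed_biInter fun a _ => hK.preimage ?_)
  simp only [commutatorElement_def]
  exact (continuous_mul_const a⁻¹).comp (hconj a)

theorem isClosed_iterCent [T1Space G] {S : Subgroup G} (hS : IsClosed (S : Set G)) (A : Set G)
    (j : ℕ) : IsClosed (iterCent S A j) := by
  induction j using Nat.strong_induction_on with
  | _ j ih =>
    rcases j with _ | j
    · rw [iterCent_zero]
      exact isClosed_singleton
    · rw [← coe_iterCentSubgroup]
      simp only [iterCentSubgroup, Subgroup.coe_inf, Subgroup.coe_iInf]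
      refine (hS.inter (isClosed_iInter fun n => isClosed_iInter fun hn =>
        isClosed_normalizer hconj (ih n (Nat.lt_succ_of_le hn)))).inter
        (isClosed_centralizerModulo hconj ?_ A)
      rw [coe_iterCentSubgroup]
      exact ih j j.lt_succ_self

/-- Elements commuting `C^{k+1}` into `C^k` conjugate `C^k ⊆ C^{k+1}` into itself, hence normalize
the closed set `C^k`. -/
theorem commutator_mem_iterCent_iff [T1Space G] {S : Subgroup G} (hS : IsClosed (S : Set G))
    {A : Set G} {k : ℕ} {g : G} :
    (∀ c ∈ iterCent S A (k + 1), ⁅g, c⁆ ∈ iterCent S A k) ↔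
      g ∈ (iterCentSubgroup S A k).centralizerModulo (iterCent S A (k + 1)) := by
  simp only [Subgroup.mem_centralizerModulo, ← SetLike.mem_coe (x := ⁅g, _⁆),
    coe_iterCentSubgroup]
  refine ⟨fun h => ⟨mem_normalizer_of_conj_mem (isClosed_iterCent hconj hS A k) fun d hd => ?_,
    h⟩, And.right⟩
  have hK := coe_iterCentSubgroup S A k
  have hmul : ⁅g, d⁆ * d ∈ iterCent S A k := by
    rw [← hK]
    exact mul_mem (hK ▸ h d (iterCent_subset_iterCent_succ S A k hd) :) (hK ▸ hd :)
  rwa [commutatorElement_def, inv_mul_cancel_right] at hmul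

theorem exists_closedSubgroup_coe_eq_env [T1Space G] (A : Set G) :
    ∀ k, ∃ E : ClosedSubgroup G, (E : Set G) = env A k
  | 0 => ⟨⟨⊤, isClosed_univ⟩, by rw [env]; rfl⟩
  | k + 1 => by
    obtain ⟨E, hE⟩ := exists_closedSubgroup_coe_eq_env A k
    have hK : IsClosed (iterCentSubgroup E.toSubgroup A k : Set G) := by
      rw [coe_iterCentSubgroup]
      exact isClosed_iterCent hconj E.isClosed' A k
    refine ⟨⟨E.toSubgroup ⊓ (iterCentSubgroup E.toSubgroup A k).centralizerModulo
      (iterCent E A (k + 1)), E.isClosed'.inter (isClosed_centralizerModulo hconj hK _)⟩, ?_⟩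
    rw [env_succ, ← hE]
    ext g
    exact and_congr_right' (commutator_mem_iterCent_iff hconj E.isClosed').symm

theorem env_stabilizes [T1Space G] (A : Set G) : ∃ N, ∀ k ≥ N, env A k = env A N := by
  refine NoetherianSpace.exists_eq_of_antitone
    (antitone_nat_of_succ_le fun k g hg => ((env_succ A k).subset hg).1) fun k => ?_
  obtain ⟨E, hE⟩ := exists_closedSubgroup_coe_eq_env hconj A k
  exact hE ▸ E.isClosed'

end NoetherianGroup

namespace Matrix.GeneralLinearGroup

open MvPolynomial

variable {ι F : Type*} [Fintype ι] [DecidableEq ι] [Field F]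
  {G : Subgroup (GeneralLinearGroup ι F)}

-- Including the entries of `g⁻¹` makes inversion a polynomial map.
def coords (g : G) : ι × ι ⊕ ι × ι → F :=
  Sum.elim (fun p => ((g : GeneralLinearGroup ι F) : Matrix ι ι F) p.1 p.2)
    fun p => (((g⁻¹ : G) : GeneralLinearGroup ι F) : Matrix ι ι F) p.1 p.2

theorem coords_injective : Function.Injective (coords : G → ι × ι ⊕ ι × ι → F) :=
  fun _ _ h => Subtype.ext <| Units.ext <| Matrix.ext fun i j => congrFun h (.inl (i, j))

theorem coords_inv (g : G) : coords g⁻¹ = coords g ∘ Sum.swap := by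
  funext s
  rcases s with p | p <;> simp [coords]

theorem coords_mul (x y : G) : coords (x * y) = Sum.elim
    (fun p => ∑ k, coords x (.inl (p.1, k)) * coords y (.inl (k, p.2)))
    (fun p => ∑ k, coords y (.inr (p.1, k)) * coords x (.inr (k, p.2))) := by
  funext s
  rcases s with p | p <;> simp [coords, Matrix.mul_apply]

def toSpec (g : G) : PrimeSpectrum (MvPolynomial (ι × ι ⊕ ι × ι) F) :=
  pointToPoint (coords g)

theorem toSpec_injective : Function.Injective (toSpec : G → _) := by
  intro g h hgh
  refine coords_injective (funext fun s => ?_)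
  have hs : X s - C (coords g s) ∈ (toSpec h).asIdeal :=
    hgh ▸ (mem_vanishingIdeal_singleton_iff _ _).2 (by simp)
  have := (mem_vanishingIdeal_singleton_iff _ _).1 hs
  simp only [map_sub, aeval_X, aeval_C, Algebra.algebraMap_self, RingHom.id_apply] at this
  exact (sub_eq_zero.1 this).symm

noncomputable abbrev zariski (G : Subgroup (GeneralLinearGroup ι F)) : TopologicalSpace G :=
  .induced toSpec inferInstance

def IsPolynomialMap (w : G → G) : Prop :=
  ∃ Q : ι × ι ⊕ ι × ι → MvPolynomial (ι × ι ⊕ ι × ι) F,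
    ∀ g, coords (w g) = fun s => aeval (coords g) (Q s)

theorem isPolynomialMap_id : IsPolynomialMap (id : G → G) :=
  ⟨X, fun g => by simp⟩

theorem isPolynomialMap_const (c : G) : IsPolynomialMap fun _ : G => c :=
  ⟨fun s => C (coords c s), fun g => by simp⟩

theorem IsPolynomialMap.inv {w : G → G} (hw : IsPolynomialMap w) :
    IsPolynomialMap fun g => (w g)⁻¹ := by
  obtain ⟨Q, hQ⟩ := hw
  exact ⟨Q ∘ Sum.swap, fun g => by rw [coords_inv, hQ]; rfl⟩

theorem IsPolynomialMap.mul {w₁ w₂ : G → G} (h₁ : IsPolynomialMap w₁)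
    (h₂ : IsPolynomialMap w₂) :
    IsPolynomialMap fun g => w₁ g * w₂ g := by
  obtain ⟨Q₁, hQ₁⟩ := h₁
  obtain ⟨Q₂, hQ₂⟩ := h₂
  refine ⟨Sum.elim (fun p => ∑ k, Q₁ (.inl (p.1, k)) * Q₂ (.inl (k, p.2)))
    (fun p => ∑ k, Q₂ (.inr (p.1, k)) * Q₁ (.inr (k, p.2))), fun g => ?_⟩
  funext s
  rcases s with p | p <;> simp [coords_mul, hQ₁, hQ₂]

section

attribute [local instance] zariski

theorem IsPolynomialMap.continuous {w : G → G} (hw : IsPolynomialMap w) : Continuous w := by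
  obtain ⟨Q, hQ⟩ := hw
  have hcomp : toSpec ∘ w = PrimeSpectrum.comap (bind₁ Q) ∘ toSpec := by
    funext g
    ext p
    simp [toSpec, pointToPoint, aeval_bind₁, hQ]
  exact continuous_induced_rng.2 <|
    hcomp ▸ (PrimeSpectrum.continuous_comap _).comp continuous_induced_dom

instance noetherianSpace_zariski : NoetherianSpace G :=
  (IsInducing.induced toSpec).noetherianSpace

instance t1Space_zariski : T1Space G := by
  refine ⟨fun g => ?_⟩
  rw [← toSpec_injective.preimage_image {g}, image_singleton]
  have : (toSpec g).asIdeal.IsMaximal := by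
    change (vanishingIdeal F {coords g}).IsMaximal
    infer_instance
  exact ((PrimeSpectrum.isClosed_singleton_iff_isMaximal _).2 this).preimage continuous_induced_dom

instance separatelyContinuousMul_zariski : SeparatelyContinuousMul G :=
  ⟨((isPolynomialMap_const _).mul isPolynomialMap_id).continuous,
    (isPolynomialMap_id.mul (isPolynomialMap_const _)).continuous⟩

theorem continuous_conj_zariski (c : G) : Continuous fun g : G => g * c * g⁻¹ :=
  ((isPolynomialMap_id.mul (isPolynomialMap_const c)).mul isPolynomialMap_id.inv).continuous

end

end Matrix.GeneralLinearGroup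

/-- For a subgroup `G` of `GL(n, F)` and a subgroup `H` of `G`, the chain of
envelopes `(E_k(H))_k` stabilizes. -/
theorem env_stabilizes_of_linear (F : Type*) [Field F] (n : ℕ)
    (G : Subgroup (Matrix.GeneralLinearGroup (Fin n) F)) (H : Subgroup G) :
    ∃ N : ℕ, ∀ k ≥ N, env ((H : Set G) : Set G) k = env ((H : Set G) : Set G) N := by
  let := Matrix.GeneralLinearGroup.zariski G
  exact env_stabilizes Matrix.GeneralLinearGroup.continuous_conj_zariski _
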